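/- For any weighted forest G=(V,E,μ,w) with n vertices and any 1 ≤ k ≤ n, the Cheeger k-constant satisfies h_k(G) = ℓ_k(G) = ℓ̲_k(G); that is, min over subpartitions (A₁,…,A_k) of max_i φ(A_i) equals max over subpartitions (A₁,…,A_{n-k+1}) of min_{B∈𝒰(A₁,…,A_{n-k+1})} φ(B), and also equals max over (n-k+1)-element subsets A⊆V of min_{∅≠B⊆A} φ(B). -/

import Mathlib

open Finset

variable {V : Type*}

noncomputable def bdryW [Fintype V] [DecidableEq V] (G : SimpleGraph V) [DecidableRel G.Adj]
    (w : Sym2 V → ℝ) (A : Finset V) : ℝ :=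
  ∑ u ∈ A, ∑ v ∈ Aᶜ, if G.Adj u v then w s(u, v) else 0

noncomputable def vol [Fintype V] (μ : V → ℝ) (A : Finset V) : ℝ := ∑ v ∈ A, μ v

noncomputable def phi [Fintype V] [DecidableEq V] (G : SimpleGraph V) [DecidableRel G.Adj]
    (μ : V → ℝ) (w : Sym2 V → ℝ) (A : Finset V) : ℝ := bdryW G w A / vol μ A

/-- A subpartition: a tuple of pairwise disjoint nonempty subsets of the vertex set. -/
def IsSubpartition {k : ℕ} (A : Fin k → Finset V) : Prop :=
  (∀ i, (A i).Nonempty) ∧ ∀ i j, i ≠ j → Disjoint (A i) (A j)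

/-- The Cheeger k-constant: min over subpartitions with k parts of the max expansion. -/
noncomputable def hkConst [Fintype V] [DecidableEq V] (G : SimpleGraph V) [DecidableRel G.Adj]
    (μ : V → ℝ) (w : Sym2 V → ℝ) (k : ℕ) : ℝ :=
  sInf {r | ∃ A : Fin k → Finset V, IsSubpartition A ∧
    r = sSup {s | ∃ i, s = phi G μ w (A i)}}

/-- Variant of the Cheeger k-constant where the maximum runs over all unions of parts. -/
noncomputable def hkUnion [Fintype V] [DecidableEq V] (G : SimpleGraph V) [DecidableRel G.Adj]
    (μ : V → ℝ) (w : Sym2 V → ℝ) (k : ℕ) : ℝ :=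
  sInf {r | ∃ A : Fin k → Finset V, IsSubpartition A ∧
    r = sSup {s | ∃ I : Finset (Fin k), I.Nonempty ∧ s = phi G μ w (I.biUnion A)}}

/-- The k-th max-min Cheeger constant ℓ_k. -/
noncomputable def ellk [Fintype V] [DecidableEq V] (G : SimpleGraph V) [DecidableRel G.Adj]
    (μ : V → ℝ) (w : Sym2 V → ℝ) (k : ℕ) : ℝ :=
  sSup {r | ∃ A : Fin (Fintype.card V - k + 1) → Finset V, IsSubpartition A ∧
    r = sInf {s | ∃ I : Finset (Fin (Fintype.card V - k + 1)), I.Nonempty ∧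
      s = phi G μ w (I.biUnion A)}}

/-- The Cheeger constant of a subset A: min of φ over nonempty subsets of A. -/
noncomputable def cheegerConst [Fintype V] [DecidableEq V] (G : SimpleGraph V) [DecidableRel G.Adj]
    (μ : V → ℝ) (w : Sym2 V → ℝ) (A : Finset V) : ℝ :=
  sInf {r | ∃ B : Finset V, B ⊆ A ∧ B.Nonempty ∧ r = phi G μ w B}

/-- The k-th Dirichlet Cheeger constant ℓ̲_k. -/
noncomputable def ellUnder [Fintype V] [DecidableEq V] (G : SimpleGraph V) [DecidableRel G.Adj]
    (μ : V → ℝ) (w : Sym2 V → ℝ) (k : ℕ) : ℝ :=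
  sSup {r | ∃ A : Finset V, A.card = Fintype.card V - k + 1 ∧ r = cheegerConst G μ w A}

/-!
The three constants are compared cyclically, `ℓ̲_k ≤ ℓ_k ≤ h_k ≤ ℓ̲_k`.

For `ℓ̲_k ≤ ℓ_k`, the singletons of an `(n - k + 1)`-set `A` form a subpartition whose unions are
subsets of `A`.

For `ℓ_k ≤ h_k`, take an optimal subpartition `A₁, …, A_k` and any `B₁, …, B_{n-k+1}`. Join the
parts in a multigraph with one extra vertex, putting one edge for every vertex of `G` between
the `A`-part and the `B`-part containing it (or the extra vertex when there is none). It has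
`n + 2` vertices and at most `n` edges, so it is disconnected, and a component avoiding the
extra vertex shows that some nonempty union of `A`-parts is a union of `B`-parts. Its expansion
is at most `h_k`, because `φ` of a disjoint union is at most the largest `φ` of the pieces.

For `h_k ≤ ℓ̲_k` the forest enters. A set with `φ < h_k` contains a connected one, i.e. a
subtree, since `φ` of a union of two sets without edges between them is a mediant. No `k` such
subtrees are disjoint, so by the Helly property of subtrees `k - 1` vertices meet them all, and
every nonempty subset of the remaining `n - k + 1` vertices has expansion at least `h_k`.
-/

section Incidence

open SimpleGraph Function

variable {α ι κ : Type*}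

noncomputable def partIndex (A : ι → Finset α) (x : α) : Option ι :=
  open Classical in if h : ∃ i, x ∈ A i then some h.choose else none

lemma partIndex_eq_some_iff {A : ι → Finset α} (hA : Pairwise (Disjoint on A)) {x : α} {i : ι} :
    partIndex A x = some i ↔ x ∈ A i := by
  unfold partIndex
  split_ifs with h
  · refine ⟨fun hi => Option.some_injective _ hi ▸ h.choose_spec, fun hx => ?_⟩
    by_contra hne
    exact Finset.disjoint_left.mp (hA (fun he => hne (congrArg some he))) h.choose_spec hx
  · simpa using fun hx => h ⟨i, hx⟩

lemma partIndex_eq_none_iff {A : ι → Finset α} {x : α} : partIndex A x = none ↔ ∀ i, x ∉ A i := by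
  unfold partIndex
  split_ifs with h <;> simpa using h

/-- Each point of `X` gives an edge between the part of `A` and the part of `B` containing it,
`none` standing in for a missing part. -/
noncomputable def incidenceGraph (A : ι → Finset α) (B : κ → Finset α) (X : Set α) :
    SimpleGraph (Option (ι ⊕ κ)) :=
  fromEdgeSet ((fun x => s((partIndex A x).map Sum.inl, (partIndex B x).map Sum.inr)) '' X)

variable [DecidableEq α] {A : ι → Finset α} {B : κ → Finset α}

lemma incidenceGraph_connected [Fintype ι] [Fintype κ]
    (hA : Pairwise (Disjoint on A)) (hB : Pairwise (Disjoint on B)) (hBne : ∀ j, (B j).Nonempty)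
    (hAB : ∀ I : Finset ι, I.Nonempty → ∀ J : Finset κ, I.biUnion A ≠ J.biUnion B) :
    (incidenceGraph A B ↑(univ.biUnion A ∪ univ.biUnion B)).Connected := by
  classical
  set Γ := incidenceGraph A B ↑(univ.biUnion A ∪ univ.biUnion B)
  have hadj : ∀ x ∈ univ.biUnion A ∪ univ.biUnion B,
      Γ.Adj ((partIndex A x).map Sum.inl) ((partIndex B x).map Sum.inr) := by
    intro x hx
    refine fromEdgeSet_adj _ |>.mpr ⟨⟨x, hx, rfl⟩, ?_⟩
    cases ha : partIndex A x <;> cases hb : partIndex B x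
    · simp only [partIndex_eq_none_iff] at ha hb
      simp [ha, hb] at hx
    all_goals simp
  -- the parts unreachable from `none` have the same union on both sides
  set I := univ.filter fun i => ¬ Γ.Reachable none (some (.inl i))
  set J := univ.filter fun j => ¬ Γ.Reachable none (some (.inr j))
  have hIJ : I.biUnion A = J.biUnion B := by
    ext x
    simp only [mem_biUnion, I, J, mem_filter, mem_univ, true_and]
    constructor
    · rintro ⟨i, hi, hx⟩
      have h := hadj x (mem_union_left _ (mem_biUnion.mpr ⟨i, mem_univ _, hx⟩))
      rw [(partIndex_eq_some_iff hA).mpr hx] at h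
      cases hb : partIndex B x with
      | none => rw [hb] at h; exact absurd h.symm.reachable hi
      | some j =>
        rw [hb] at h
        exact ⟨j, fun hj => hi (hj.trans h.symm.reachable), (partIndex_eq_some_iff hB).mp hb⟩
    · rintro ⟨j, hj, hx⟩
      have h := hadj x (mem_union_right _ (mem_biUnion.mpr ⟨j, mem_univ _, hx⟩))
      rw [(partIndex_eq_some_iff hB).mpr hx] at h
      cases ha : partIndex A x with
      | none => rw [ha] at h; exact absurd h.reachable hj
      | some i =>
        rw [ha] at h
        exact ⟨i, fun hi => hj (hi.trans h.reachable), (partIndex_eq_some_iff hA).mp ha⟩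
  have hI : I = ∅ := not_nonempty_iff_eq_empty.mp fun hI => hAB I hI J hIJ
  have hJ : J = ∅ := eq_empty_of_forall_notMem fun j hj => by
    obtain ⟨x, hx⟩ := hBne j
    simpa [← hIJ, hI] using mem_biUnion.mpr ⟨j, hj, hx⟩
  refine (connected_iff_exists_forall_reachable _).mpr ⟨none, ?_⟩
  rintro (_ | i | j)
  · rfl
  · by_contra h; simpa [hI] using (show i ∈ I by simpa [I] using h)
  · by_contra h; simpa [hJ] using (show j ∈ J by simpa [J] using h)

theorem exists_biUnion_eq_biUnion_of_card_lt [Fintype ι] [Fintype κ]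
    (hA : Pairwise (Disjoint on A)) (hB : Pairwise (Disjoint on B)) (hBne : ∀ j, (B j).Nonempty)
    (hcard : #(univ.biUnion A ∪ univ.biUnion B) < Fintype.card ι + Fintype.card κ) :
    ∃ I : Finset ι, I.Nonempty ∧ ∃ J : Finset κ, I.biUnion A = J.biUnion B := by
  by_contra! hAB
  have hvert := (incidenceGraph_connected hA hB hBne hAB).card_vert_le_card_edgeSet_add_one
  have hedge : Nat.card (incidenceGraph A B ↑(univ.biUnion A ∪ univ.biUnion B)).edgeSet ≤
      #(univ.biUnion A ∪ univ.biUnion B) := by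
    rw [incidenceGraph, edgeSet_fromEdgeSet, Nat.card_coe_set_eq]
    refine (Set.ncard_le_ncard Set.sdiff_subset (Set.toFinite _)).trans ?_
    exact (Set.ncard_image_le (Finset.finite_toSet _)).trans (Set.ncard_coe_finset _).le
  simp only [Nat.card_eq_fintype_card, Fintype.card_option, Fintype.card_sum] at hvert
  omega

end Incidence

def PreconnectedOn (G : SimpleGraph V) (X : Finset V) : Prop :=
  ∀ x ∈ X, ∀ y ∈ X, Relation.ReflTransGen (fun u v => G.Adj u v ∧ u ∈ X ∧ v ∈ X) x y

section Preconnected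

variable {G : SimpleGraph V}

lemma PreconnectedOn.exists_adj {T : Finset V} (hT : PreconnectedOn G T) {u b : V} (hu : u ∈ T)
    (hb : b ∈ T) (hub : u ≠ b) : ∃ c ∈ T, G.Adj u c := by
  rcases (hT u hu b hb).cases_head with rfl | ⟨c, ⟨huc, -, hc⟩, -⟩
  exacts [absurd rfl hub, ⟨c, hc, huc⟩]

/-- Walks through `u` can be short-cut at its only neighbour in `T`. -/
lemma PreconnectedOn.erase [DecidableEq V] {T : Finset V} (hT : PreconnectedOn G T) {u : V}
    (hleaf : ∀ a ∈ T, ∀ b ∈ T, G.Adj u a → G.Adj u b → a = b) : PreconnectedOn G (T.erase u) := by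
  intro x hx y hy
  obtain ⟨c, hc⟩ : ∃ c, ∀ b ∈ T, G.Adj u b → b = c := by
    by_cases h : ∃ c ∈ T, G.Adj u c
    · obtain ⟨c, hcT, huc⟩ := h
      exact ⟨c, fun b hb hub => hleaf b hb c hcT hub huc⟩
    · exact ⟨u, fun b hb hub => absurd ⟨b, hb, hub⟩ h⟩
  have hstep := (hT x (mem_of_mem_erase hx) y (mem_of_mem_erase hy)).lift'
    (p := fun a b => G.Adj a b ∧ a ∈ T.erase u ∧ b ∈ T.erase u)
    (fun z => if z = u then c else z) fun a b ⟨hab, ha, hb⟩ => by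
      simp only [Function.onFun]
      by_cases hau : a = u
      · subst hau
        simpa [hc b hb hab] using .refl
      by_cases hbu : b = u
      · subst hbu
        simpa [hc a ha hab.symm] using .refl
      simpa [hau, hbu] using .single ⟨hab, ⟨hau, ha⟩, ⟨hbu, hb⟩⟩
  simpa [Function.onFun, ne_of_mem_erase hx, ne_of_mem_erase hy] using hstep

/-- If both sets contain `u`, they both contain its only neighbour in `U`. -/
lemma PreconnectedOn.disjoint_of_disjoint_erase [DecidableEq V] {U T₁ T₂ : Finset V} {u : V}
    (hleaf : ∀ a ∈ U, ∀ b ∈ U, G.Adj u a → G.Adj u b → a = b)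
    (h₁ : PreconnectedOn G T₁) (h₂ : PreconnectedOn G T₂) (hT₁ : T₁ ⊆ U) (hT₂ : T₂ ⊆ U)
    (hne₁ : (T₁.erase u).Nonempty) (hne₂ : (T₂.erase u).Nonempty)
    (hdisj : Disjoint (T₁.erase u) (T₂.erase u)) : Disjoint T₁ T₂ := by
  refine disjoint_left.mpr fun y hy₁ hy₂ => ?_
  by_cases hyu : y = u
  · subst hyu
    obtain ⟨b₁, hb₁⟩ := hne₁
    obtain ⟨b₂, hb₂⟩ := hne₂
    obtain ⟨c₁, hc₁, hyc₁⟩ := h₁.exists_adj hy₁ (mem_of_mem_erase hb₁) (ne_of_mem_erase hb₁).symm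
    obtain ⟨c₂, hc₂, hyc₂⟩ := h₂.exists_adj hy₂ (mem_of_mem_erase hb₂) (ne_of_mem_erase hb₂).symm
    obtain rfl := hleaf c₁ (hT₁ hc₁) c₂ (hT₂ hc₂) hyc₁ hyc₂
    exact disjoint_left.mp hdisj (mem_erase.mpr ⟨hyc₁.ne', hc₁⟩) (mem_erase.mpr ⟨hyc₁.ne', hc₂⟩)
  · exact disjoint_left.mp hdisj (mem_erase.mpr ⟨hyu, hy₁⟩) (mem_erase.mpr ⟨hyu, hy₂⟩)

lemma exists_ssubset_forall_not_adj_of_not_preconnectedOn [DecidableEq V] {X : Finset V}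
    (h : ¬ PreconnectedOn G X) :
    ∃ Y ⊂ X, Y.Nonempty ∧ ∀ u ∈ Y, ∀ v ∈ X \ Y, ¬ G.Adj u v := by
  classical
  simp only [PreconnectedOn, not_forall] at h
  obtain ⟨x, hx, y, hy, hxy⟩ := h
  let Y := X.filter (Relation.ReflTransGen (fun u v => G.Adj u v ∧ u ∈ X ∧ v ∈ X) x)
  refine ⟨Y, (filter_subset _ _).ssubset_of_ne fun hYX => hxy ?_,
    ⟨x, mem_filter.mpr ⟨hx, .refl⟩⟩, fun u hu v hv huv => ?_⟩
  · rw [← hYX] at hy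
    exact (mem_filter.mp hy).2
  · obtain ⟨huX, hxu⟩ := mem_filter.mp hu
    obtain ⟨hvX, hvY⟩ := mem_sdiff.mp hv
    exact hvY (mem_filter.mpr ⟨hvX, hxu.tail ⟨huv, huX, hvX⟩⟩)

/-- Take an end of a longest path in the induced subgraph. -/
lemma SimpleGraph.IsAcyclic.exists_mem_forall_adj_eq (hG : G.IsAcyclic) {U : Finset V}
    (hU : U.Nonempty) : ∃ u ∈ U, ∀ a ∈ U, ∀ b ∈ U, G.Adj u a → G.Adj u b → a = b := by
  have : Nonempty (U : Set V) := hU.to_subtype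
  set H := G.induce (U : Set V)
  obtain ⟨u, v, p, hp, hmax⟩ := SimpleGraph.Walk.exists_isPath_forall_isPath_length_le_length H
  have hsnd : ∀ a, H.Adj u a → a = p.snd := fun a hua =>
    (hG.induce _).eq_snd_of_adj_start hp hua <| by
      by_contra ha
      have := hmax a v (p.cons hua.symm) (hp.cons ha)
      simp at this
  refine ⟨u, u.2, fun a ha b hb hua hub => ?_⟩
  simpa using (hsnd ⟨a, ha⟩ hua).trans (hsnd ⟨b, hb⟩ hub).symm

lemma exists_pairwiseDisjoint_of_subset_image_erase [DecidableEq V] {U : Finset V} {u : V}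
    (hleaf : ∀ a ∈ U, ∀ b ∈ U, G.Adj u a → G.Adj u b → a = b)
    {F : Set (Finset V)} (hF : ∀ T ∈ F, T ⊆ U ∧ PreconnectedOn G T ∧ (T.erase u).Nonempty)
    {P : Finset (Finset V)} (hPF : ↑P ⊆ (·.erase u) '' F)
    (hP : (P : Set (Finset V)).PairwiseDisjoint id) :
    ∃ Q : Finset (Finset V), ↑Q ⊆ F ∧ (Q : Set (Finset V)).PairwiseDisjoint id ∧
      Q.card = P.card := by
  obtain ⟨Q, hQF, hinj, rfl⟩ := exists_subset_injOn_image_eq_of_surjOn F P hPF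
  refine ⟨Q, hQF, fun T₁ h₁ T₂ h₂ hT => ?_, (card_image_of_injOn hinj).symm⟩
  obtain ⟨hT₁U, hT₁, hne₁⟩ := hF T₁ (hQF h₁)
  obtain ⟨hT₂U, hT₂, hne₂⟩ := hF T₂ (hQF h₂)
  exact hT₁.disjoint_of_disjoint_erase hleaf hT₂ hT₁U hT₂U hne₁ hne₂
    (hP (mem_image_of_mem _ h₁) (mem_image_of_mem _ h₂) fun h => hT (hinj h₁ h₂ h))

/-- The Helly property of subtrees of a forest. Induct on the vertex set, removing a leaf `u`: if
`{u}` is one of the subtrees, put `u` into the hitting set and drop the subtrees through `u`;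
otherwise delete `u` from every subtree. -/
theorem SimpleGraph.IsAcyclic.exists_card_le_forall_not_disjoint [DecidableEq V]
    (hG : G.IsAcyclic) (U : Finset V) (F : Set (Finset V)) (p : ℕ)
    (hF : ∀ T ∈ F, T ⊆ U ∧ T.Nonempty ∧ PreconnectedOn G T)
    (hpack : ∀ P : Finset (Finset V), ↑P ⊆ F → (P : Set (Finset V)).PairwiseDisjoint id →
      P.card ≤ p) :
    ∃ W : Finset V, W.card ≤ p ∧ ∀ T ∈ F, ¬ Disjoint T W := by
  induction U using Finset.strongInduction generalizing F p with
  | H U ih =>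
  rcases U.eq_empty_or_nonempty with rfl | hU
  · exact ⟨∅, by simp, fun T hT => absurd (subset_empty.mp (hF T hT).1) (hF T hT).2.1.ne_empty⟩
  obtain ⟨u, hu, hleaf⟩ := hG.exists_mem_forall_adj_eq hU
  by_cases hsing : {u} ∈ F
  · have hpack' : ∀ P : Finset (Finset V), ↑P ⊆ {T ∈ F | u ∉ T} →
        (P : Set (Finset V)).PairwiseDisjoint id → P.card + 1 ≤ p := by
      intro P hPF hP
      have hnot : {u} ∉ P := fun h => (hPF h).2 (mem_singleton_self u)
      rw [← card_insert_of_notMem hnot]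
      refine hpack _ (by simpa [Set.insert_subset_iff, hsing] using hPF.trans (fun T hT => hT.1))
        (by simpa using hP.insert fun T hT _ => disjoint_singleton_left.mpr (hPF hT).2)
    obtain ⟨W, hW, hWF⟩ := ih (U.erase u) (erase_ssubset hu) {T ∈ F | u ∉ T} (p - 1)
      (fun T ⟨hT, huT⟩ => ⟨fun x hx => mem_erase.mpr ⟨fun h => huT (h ▸ hx), (hF T hT).1 hx⟩,
        (hF T hT).2⟩)
      (fun P hPF hP => Nat.le_sub_one_of_lt (hpack' P hPF hP))
    have hp := hpack' ∅ (by simp) (by simp)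
    refine ⟨insert u W, (card_insert_le _ _).trans (by simp at hp; omega), fun T hT => ?_⟩
    by_cases huT : u ∈ T
    · exact not_disjoint_iff.mpr ⟨u, huT, mem_insert_self u W⟩
    · exact fun h => hWF T ⟨hT, huT⟩ (h.mono_right (subset_insert u W))
  · have hne : ∀ T ∈ F, (T.erase u).Nonempty := fun T hT => by
      rw [nonempty_iff_ne_empty, Ne, erase_eq_empty_iff, not_or]
      exact ⟨(hF T hT).2.1.ne_empty, fun h => hsing (h ▸ hT)⟩
    obtain ⟨W, hW, hWF⟩ := ih (U.erase u) (erase_ssubset hu) ((·.erase u) '' F) p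
      (by
        rintro _ ⟨T, hT, rfl⟩
        exact ⟨erase_subset_erase u (hF T hT).1, hne T hT, (hF T hT).2.2.erase
          fun a ha b hb => hleaf a ((hF T hT).1 ha) b ((hF T hT).1 hb)⟩)
      fun P hPF hP => by
        obtain ⟨Q, hQF, hQ, hcard⟩ := exists_pairwiseDisjoint_of_subset_image_erase hleaf
          (fun T hT => ⟨(hF T hT).1, (hF T hT).2.2, hne T hT⟩) hPF hP
        exact hcard ▸ hpack Q hQF hQ
    exact ⟨W, hW, fun T hT h => hWF _ ⟨T, hT, rfl⟩ (h.mono_left (erase_subset u T))⟩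

end Preconnected

lemma vol_pos [Fintype V] {μ : V → ℝ} (hμ : ∀ v, 0 < μ v) {A : Finset V} (hA : A.Nonempty) :
    0 < vol μ A :=
  sum_pos (fun v _ => hμ v) hA

section Expansion

variable [Fintype V] [DecidableEq V] {G : SimpleGraph V} [DecidableRel G.Adj]
  {μ : V → ℝ} {w : Sym2 V → ℝ}

lemma bdryW_biUnion_le (hw : ∀ e ∈ G.edgeSet, 0 < w e) {ι : Type*} {I : Finset ι}
    {A : ι → Finset V} (hA : (I : Set ι).PairwiseDisjoint A) :
    bdryW G w (I.biUnion A) ≤ ∑ i ∈ I, bdryW G w (A i) := by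
  rw [bdryW, sum_biUnion hA]
  refine sum_le_sum fun i hi => sum_le_sum fun u _ => ?_
  refine sum_le_sum_of_subset_of_nonneg (compl_subset_compl.mpr (subset_biUnion_of_mem A hi))
    fun v _ _ => ?_
  split_ifs with huv
  exacts [(hw _ huv).le, le_rfl]

lemma bdryW_union_of_forall_not_adj {A B : Finset V} (hAB : Disjoint A B)
    (hno : ∀ u ∈ A, ∀ v ∈ B, ¬ G.Adj u v) :
    bdryW G w (A ∪ B) = bdryW G w A + bdryW G w B := by
  unfold bdryW
  rw [sum_union hAB]
  congr 1 <;> refine sum_congr rfl fun u hu => sum_subset (compl_subset_compl.mpr ?_) ?_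
  · exact subset_union_left
  · intro v hv hv'
    have hvB : v ∈ B := by simp_all
    exact if_neg (hno u hu v hvB)
  · exact subset_union_right
  · intro v hv hv'
    have hvA : v ∈ A := by simp_all
    exact if_neg fun h => hno v hvA u hu h.symm

lemma phi_le_iff (hμ : ∀ v, 0 < μ v) {A : Finset V} (hA : A.Nonempty) {c : ℝ} :
    phi G μ w A ≤ c ↔ bdryW G w A ≤ c * vol μ A :=
  div_le_iff₀ (vol_pos hμ hA)

lemma phi_lt_iff (hμ : ∀ v, 0 < μ v) {A : Finset V} (hA : A.Nonempty) {c : ℝ} :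
    phi G μ w A < c ↔ bdryW G w A < c * vol μ A :=
  div_lt_iff₀ (vol_pos hμ hA)

lemma phi_biUnion_le (hμ : ∀ v, 0 < μ v) (hw : ∀ e ∈ G.edgeSet, 0 < w e) {ι : Type*}
    {I : Finset ι} {A : ι → Finset V} (hA : (I : Set ι).PairwiseDisjoint A)
    (hAne : ∀ i ∈ I, (A i).Nonempty) (hI : I.Nonempty) {c : ℝ}
    (hc : ∀ i ∈ I, phi G μ w (A i) ≤ c) : phi G μ w (I.biUnion A) ≤ c := by
  rw [phi_le_iff hμ (hI.biUnion hAne)]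
  calc bdryW G w (I.biUnion A) ≤ ∑ i ∈ I, bdryW G w (A i) := bdryW_biUnion_le hw hA
    _ ≤ ∑ i ∈ I, c * vol μ (A i) :=
      sum_le_sum fun i hi => (phi_le_iff hμ (hAne i hi)).mp (hc i hi)
    _ = c * vol μ (I.biUnion A) := by rw [vol, sum_biUnion hA, mul_sum]; rfl

lemma exists_preconnectedOn_subset_phi_lt (hμ : ∀ v, 0 < μ v) {c : ℝ} {X : Finset V}
    (hX : X.Nonempty) (hXc : phi G μ w X < c) :
    ∃ T ⊆ X, T.Nonempty ∧ PreconnectedOn G T ∧ phi G μ w T < c := by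
  induction X using Finset.strongInduction with
  | H X ih =>
  by_cases hconn : PreconnectedOn G X
  · exact ⟨X, subset_rfl, hX, hconn, hXc⟩
  obtain ⟨Y, hYX, hY, hno⟩ := exists_ssubset_forall_not_adj_of_not_preconnectedOn hconn
  have hZX : X \ Y ⊂ X := sdiff_ssubset hYX.subset hY
  have hZ : (X \ Y).Nonempty := sdiff_nonempty.mpr hYX.not_subset
  have hsplit : X = Y ∪ X \ Y := (union_sdiff_of_subset hYX.subset).symm
  have hbdry : bdryW G w X = bdryW G w Y + bdryW G w (X \ Y) := by
    rw [hsplit, bdryW_union_of_forall_not_adj disjoint_sdiff hno, ← hsplit]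
  have hvol : vol μ X = vol μ Y + vol μ (X \ Y) := by
    rw [vol, vol, vol, ← sum_union disjoint_sdiff, ← hsplit]
  rw [phi_lt_iff hμ hX, hbdry, hvol] at hXc
  by_cases hYc : phi G μ w Y < c
  · obtain ⟨T, hTY, hT⟩ := ih Y hYX hY hYc
    exact ⟨T, hTY.trans hYX.subset, hT⟩
  · have hZc : phi G μ w (X \ Y) < c := by
      rw [phi_lt_iff hμ hY, not_lt] at hYc
      rw [phi_lt_iff hμ hZ]
      linarith
    obtain ⟨T, hTZ, hT⟩ := ih (X \ Y) hZX hZ hZc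
    exact ⟨T, hTZ.trans hZX.subset, hT⟩

end Expansion

lemma IsSubpartition.pairwise_disjoint {k : ℕ} {A : Fin k → Finset V} (hA : IsSubpartition A) :
    Pairwise (Function.onFun Disjoint A) :=
  fun i j => hA.2 i j

lemma exists_subpartition_of_pairwiseDisjoint {P : Finset (Finset V)}
    (hP : (P : Set (Finset V)).PairwiseDisjoint id) (hne : ∀ T ∈ P, T.Nonempty) {k : ℕ}
    (hk : P.card = k) : ∃ A : Fin k → Finset V, IsSubpartition A ∧ ∀ i, A i ∈ P := by
  set e := P.equivFinOfCardEq hk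
  refine ⟨fun i => e.symm i, ⟨fun i => hne _ (e.symm i).2, fun i j hij => ?_⟩,
    fun i => (e.symm i).2⟩
  exact hP (e.symm i).2 (e.symm j).2 fun h => hij (e.symm.injective (Subtype.ext h))

lemma exists_subpartition_subset {S : Finset V} {k : ℕ} (hS : S.card = k) :
    ∃ A : Fin k → Finset V, IsSubpartition A ∧ ∀ i, A i ⊆ S := by
  set e := S.equivFinOfCardEq hS
  refine ⟨fun i => {(e.symm i : V)}, ⟨fun i => singleton_nonempty _, fun i j hij => ?_⟩,
    fun i => singleton_subset_iff.mpr (e.symm i).2⟩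
  exact disjoint_singleton.mpr fun h => hij (e.symm.injective (Subtype.ext h))

lemma exists_subpartition [Fintype V] {k : ℕ} (hk : k ≤ Fintype.card V) :
    ∃ A : Fin k → Finset V, IsSubpartition A := by
  obtain ⟨S, -, hS⟩ := exists_subset_card_eq (s := (univ : Finset V)) (by simpa using hk)
  exact (exists_subpartition_subset hS).imp fun _ h => h.1

section Constants

variable [Fintype V] [DecidableEq V] {G : SimpleGraph V} [DecidableRel G.Adj]
  {μ : V → ℝ} {w : Sym2 V → ℝ} {k : ℕ}

lemma finite_setOf_sSup_phi :
    {r | ∃ A : Fin k → Finset V, IsSubpartition A ∧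
      r = sSup {s | ∃ i, s = phi G μ w (A i)}}.Finite :=
  (Set.finite_range _).subset (by rintro _ ⟨A, -, rfl⟩; exact ⟨A, rfl⟩)

lemma finite_setOf_phi (A : Fin k → Finset V) : {s | ∃ i, s = phi G μ w (A i)}.Finite :=
  (Set.finite_range _).subset fun _ ⟨i, hi⟩ => ⟨i, hi.symm⟩

lemma exists_phi_le_hkConst (hkn : k ≤ Fintype.card V) :
    ∃ A : Fin k → Finset V, IsSubpartition A ∧ ∀ i, phi G μ w (A i) ≤ hkConst G μ w k := by
  obtain ⟨A₀, hA₀⟩ := exists_subpartition (V := V) hkn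
  obtain ⟨A, hA, hAeq⟩ := Set.Nonempty.csInf_mem
    (s := {r | ∃ A : Fin k → Finset V, IsSubpartition A ∧ r = sSup {s | ∃ i, s = phi G μ w (A i)}})
    ⟨_, A₀, hA₀, rfl⟩ finite_setOf_sSup_phi
  refine ⟨A, hA, fun i => ?_⟩
  rw [hkConst, hAeq]
  exact le_csSup (finite_setOf_phi A).bddAbove ⟨i, rfl⟩

lemma hkConst_lt (hk : 1 ≤ k) {A : Fin k → Finset V} (hA : IsSubpartition A) {c : ℝ}
    (hc : ∀ i, phi G μ w (A i) < c) : hkConst G μ w k < c :=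
  calc hkConst G μ w k ≤ sSup {s | ∃ i, s = phi G μ w (A i)} :=
        csInf_le finite_setOf_sSup_phi.bddBelow ⟨A, hA, rfl⟩
    _ < c := ((finite_setOf_phi A).csSup_lt_iff ⟨_, ⟨0, hk⟩, rfl⟩).mpr
        (by rintro _ ⟨i, rfl⟩; exact hc i)

lemma le_ellk {B : Fin (Fintype.card V - k + 1) → Finset V} (hB : IsSubpartition B) {c : ℝ}
    (hc : ∀ J : Finset (Fin (Fintype.card V - k + 1)), J.Nonempty → c ≤ phi G μ w (J.biUnion B)) :
    c ≤ ellk G μ w k := by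
  have hinf : c ≤ sInf {s | ∃ J : Finset (Fin (Fintype.card V - k + 1)), J.Nonempty ∧
      s = phi G μ w (J.biUnion B)} :=
    le_csInf ⟨_, {0}, singleton_nonempty _, rfl⟩ (by rintro _ ⟨J, hJ, rfl⟩; exact hc J hJ)
  refine hinf.trans (le_csSup ?_ ⟨B, hB, rfl⟩)
  exact ((Set.finite_range _).subset (by rintro _ ⟨B, -, rfl⟩; exact ⟨B, rfl⟩)).bddAbove

lemma ellk_le (hk : 1 ≤ k) (hkn : k ≤ Fintype.card V) {c : ℝ}
    (hc : ∀ B : Fin (Fintype.card V - k + 1) → Finset V, IsSubpartition B →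
      ∃ J : Finset (Fin (Fintype.card V - k + 1)), J.Nonempty ∧ phi G μ w (J.biUnion B) ≤ c) :
    ellk G μ w k ≤ c := by
  obtain ⟨B₀, hB₀⟩ := exists_subpartition (V := V) (k := Fintype.card V - k + 1) (by omega)
  refine csSup_le ⟨_, B₀, hB₀, rfl⟩ ?_
  rintro _ ⟨B, hB, rfl⟩
  obtain ⟨J, hJ, hJc⟩ := hc B hB
  have hfin : {s | ∃ J : Finset (Fin (Fintype.card V - k + 1)), J.Nonempty ∧
      s = phi G μ w (J.biUnion B)}.Finite :=
    (Set.finite_range _).subset (by rintro _ ⟨J, -, rfl⟩; exact ⟨J, rfl⟩)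
  exact (csInf_le hfin.bddBelow ⟨J, hJ, rfl⟩).trans hJc

lemma cheegerConst_le {A B : Finset V} (hBA : B ⊆ A) (hB : B.Nonempty) :
    cheegerConst G μ w A ≤ phi G μ w B :=
  csInf_le ((Set.finite_range _).subset (by rintro _ ⟨B, -, -, rfl⟩; exact ⟨B, rfl⟩)).bddBelow
    ⟨B, hBA, hB, rfl⟩

lemma le_cheegerConst {A : Finset V} (hA : A.Nonempty) {c : ℝ}
    (hc : ∀ B ⊆ A, B.Nonempty → c ≤ phi G μ w B) : c ≤ cheegerConst G μ w A :=
  le_csInf ⟨_, A, subset_rfl, hA, rfl⟩ (by rintro _ ⟨B, hBA, hB, rfl⟩; exact hc B hBA hB)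

lemma cheegerConst_le_ellUnder {A : Finset V} (hA : A.card = Fintype.card V - k + 1) :
    cheegerConst G μ w A ≤ ellUnder G μ w k :=
  le_csSup ((Set.finite_range _).subset (by rintro _ ⟨A, -, rfl⟩; exact ⟨A, rfl⟩)).bddAbove
    ⟨A, hA, rfl⟩

lemma ellUnder_le (hk : 1 ≤ k) (hkn : k ≤ Fintype.card V) {c : ℝ}
    (hc : ∀ A : Finset V, A.card = Fintype.card V - k + 1 → cheegerConst G μ w A ≤ c) :
    ellUnder G μ w k ≤ c := by
  obtain ⟨A₀, -, hA₀⟩ := exists_subset_card_eq (s := (univ : Finset V))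
    (n := Fintype.card V - k + 1) (by simp; omega)
  exact csSup_le ⟨_, A₀, hA₀, rfl⟩ (by rintro _ ⟨A, hA, rfl⟩; exact hc A hA)

end Constants

section Minimax

variable [Fintype V] [DecidableEq V] {G : SimpleGraph V} [DecidableRel G.Adj]
  {μ : V → ℝ} {w : Sym2 V → ℝ} {k : ℕ}

theorem ellUnder_le_ellk (hk : 1 ≤ k) (hkn : k ≤ Fintype.card V) :
    ellUnder G μ w k ≤ ellk G μ w k :=
  ellUnder_le hk hkn fun A hA => by
    obtain ⟨B, hB, hBA⟩ := exists_subpartition_subset hA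
    exact le_ellk hB fun J hJ =>
      cheegerConst_le (biUnion_subset.mpr fun j _ => hBA j) (hJ.biUnion fun j _ => hB.1 j)

theorem ellk_le_hkConst (hμ : ∀ v, 0 < μ v) (hw : ∀ e ∈ G.edgeSet, 0 < w e) (hk : 1 ≤ k)
    (hkn : k ≤ Fintype.card V) : ellk G μ w k ≤ hkConst G μ w k := by
  obtain ⟨A, hA, hAh⟩ := exists_phi_le_hkConst (G := G) (μ := μ) (w := w) hkn
  refine ellk_le hk hkn fun B hB => ?_
  obtain ⟨I, hI, J, hIJ⟩ := exists_biUnion_eq_biUnion_of_card_lt hA.pairwise_disjoint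
    hB.pairwise_disjoint hB.1 (by simpa using (card_le_univ _).trans_lt (by omega))
  have hIA := phi_biUnion_le hμ hw (hA.pairwise_disjoint.set_pairwise _) (fun i _ => hA.1 i) hI
    fun i _ => hAh i
  obtain ⟨j, hj, -⟩ := biUnion_nonempty.mp (hIJ ▸ hI.biUnion fun i _ => hA.1 i)
  exact ⟨J, ⟨j, hj⟩, hIJ ▸ hIA⟩

theorem hkConst_le_ellUnder (hG : G.IsAcyclic) (hμ : ∀ v, 0 < μ v) (hk : 1 ≤ k)
    (hkn : k ≤ Fintype.card V) : hkConst G μ w k ≤ ellUnder G μ w k := by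
  obtain ⟨W, hW, hWF⟩ := hG.exists_card_le_forall_not_disjoint univ
    {T | T.Nonempty ∧ PreconnectedOn G T ∧ phi G μ w T < hkConst G μ w k} (k - 1)
    (fun T hT => ⟨subset_univ T, hT.1, hT.2.1⟩) fun P hPF hP => by
      by_contra! hPk
      obtain ⟨Q, hQP, hQ⟩ := exists_subset_card_eq (show k ≤ P.card by omega)
      obtain ⟨A, hA, hAQ⟩ := exists_subpartition_of_pairwiseDisjoint (hP.subset hQP)
        (fun T hT => (hPF (hQP hT)).1) hQ
      exact (hkConst_lt hk hA fun i => (hPF (hQP (hAQ i))).2.2).false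
  obtain ⟨A, hAW, hA⟩ := exists_subset_card_eq (s := univ \ W) (n := Fintype.card V - k + 1)
    (by rw [card_sdiff_of_subset (subset_univ W), card_univ]; omega)
  refine (le_cheegerConst (card_pos.mp (by omega)) fun B hBA hB => ?_).trans
    (cheegerConst_le_ellUnder hA)
  by_contra! hBh
  obtain ⟨T, hTB, hT, hTc, hTh⟩ := exists_preconnectedOn_subset_phi_lt hμ hB hBh
  exact hWF T ⟨hT, hTc, hTh⟩ (sdiff_disjoint.mono_left (hTB.trans (hBA.trans hAW)))

end Minimax

theorem forest_hk_eq_ellk_eq_ellUnder [Fintype V] [DecidableEq V]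
    (G : SimpleGraph V) [DecidableRel G.Adj] (hG : G.IsAcyclic)
    (μ : V → ℝ) (w : Sym2 V → ℝ) (hμ : ∀ v, 0 < μ v) (hw : ∀ e ∈ G.edgeSet, 0 < w e)
    (k : ℕ) (hk : 1 ≤ k) (hkn : k ≤ Fintype.card V) :
    hkConst G μ w k = ellk G μ w k ∧ hkConst G μ w k = ellUnder G μ w k := by
  have h₁ : ellUnder G μ w k ≤ ellk G μ w k := ellUnder_le_ellk hk hkn
  have h₂ : ellk G μ w k ≤ hkConst G μ w k := ellk_le_hkConst hμ hw hk hkn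
  have h₃ : hkConst G μ w k ≤ ellUnder G μ w k := hkConst_le_ellUnder hG hμ hk hkn
  exact ⟨le_antisymm (h₃.trans h₁) h₂, le_antisymm h₃ (h₁.trans h₂)⟩
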